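/- arXiv:2310.14132 — 4 statements merged into one kernel-verified Lean document; each statement's English description precedes it below -/
import Mathlib

section
/- Under the assumptions of the self-consistency equation, one has 1 − X − Y ≥ (1/2)·min(Im(z), 1) > 0, where X = |m|² and Y = (d/(d−1))|w|²|m|²/|z + (d/(d−1))m|². -/
/-!
With `c = d/(d-1) ∈ (0, 2]`, `ζ = z + c m` and `D = |w|² - ζ (z + m)`, the equation reads
`m D = ζ`. Computing `Im (ζ · conj D)` both as `Im m · |D|²` and as `|w|² Im ζ + |ζ|² Im (z + m)`,
and using `|ζ|² = X |D|²`, `Y = c |w|² / |D|²`, gives the balance identity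
`c · Im m · (1 - X - Y) = (Y + c X) · Im z`. Its right side is positive, so `1 - X - Y > 0`;
squaring it and using `(Im m)² ≤ X` and `(Y + c X)² ≥ c² X (X + Y)` (this is where `c ≤ 2`
enters) yields `(X + Y) (Im z)² ≤ (1 - X - Y)²`, which forces `1 - X - Y ≥ min (Im z) 1 / 2`.
-/

/-- `Y` from the singularity analysis of the self-consistency equation. -/
noncomputable def Ysc (d : ℕ) (z w m : ℂ) : ℝ :=
  ((d : ℝ) / ((d : ℝ) - 1)) * ‖w‖ ^ 2 * ‖m‖ ^ 2
    / ‖z + ((d : ℂ) / ((d : ℂ) - 1)) * m‖ ^ 2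

open ComplexConjugate

lemma half_min_le_one_sub_of_mul_sq_le {S a : ℝ} (h1 : 0 ≤ 1 - S)
    (h : S * a ^ 2 ≤ (1 - S) ^ 2) : 1 / 2 * min a 1 ≤ 1 - S := by
  rcases le_or_gt S (1 / 4) with hS | hS
  · linarith [min_le_right a 1]
  · have : a / 2 ≤ 1 - S := by nlinarith [sq_nonneg a]
    linarith [min_le_left a 1]

lemma half_min_le_one_sub_of_balance {c t a X Y : ℝ} (hc0 : 0 < c) (hc2 : c ≤ 2) (ht : 0 < t)
    (ha : 0 < a) (hY : 0 ≤ Y) (htX : t ^ 2 ≤ X)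
    (hbal : c * t * (1 - X - Y) = (Y + c * X) * a) :
    1 / 2 * min a 1 ≤ 1 - X - Y := by
  have hX : 0 < X := by nlinarith
  have hpos : 0 < 1 - X - Y := by
    have : 0 < c * t * (1 - X - Y) := by rw [hbal]; positivity
    exact pos_of_mul_pos_right this (by positivity)
  have hcross : c ^ 2 * X * (X + Y) ≤ (Y + c * X) ^ 2 := by
    nlinarith [mul_nonneg (mul_nonneg (mul_nonneg hc0.le hX.le) hY) (sub_nonneg.2 hc2)]
  have hsq : c ^ 2 * t ^ 2 * ((X + Y) * a ^ 2) ≤ c ^ 2 * t ^ 2 * (1 - X - Y) ^ 2 := calc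
    c ^ 2 * t ^ 2 * ((X + Y) * a ^ 2) ≤ c ^ 2 * X * (X + Y) * a ^ 2 := by
      have : 0 ≤ c ^ 2 * (X + Y) * a ^ 2 := by positivity
      nlinarith
    _ ≤ ((Y + c * X) * a) ^ 2 := by rw [mul_pow]; gcongr
    _ = c ^ 2 * t ^ 2 * (1 - X - Y) ^ 2 := by rw [← hbal]; ring
  have := half_min_le_one_sub_of_mul_sq_le (S := X + Y) (a := a) (by linarith)
    (by nlinarith [le_of_mul_le_mul_left hsq (by positivity)])
  linarith

lemma im_mul_conj_ofReal_sub_mul (W : ℝ) (ζ u : ℂ) :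
    (ζ * conj ((W : ℂ) - ζ * u)).im = W * ζ.im + ‖ζ‖ ^ 2 * u.im := by
  have : ζ * conj ((W : ℂ) - ζ * u) = W * ζ - (‖ζ‖ ^ 2 : ℝ) * conj u := by
    rw [map_sub, map_mul, Complex.conj_ofReal, Complex.ofReal_pow, ← Complex.mul_conj']
    ring
  rw [this, Complex.sub_im, Complex.im_ofReal_mul, Complex.im_ofReal_mul, Complex.conj_im]
  ring

lemma balance_of_self_consistency {c W : ℝ} {z m : ℂ} (hne : z + c * m ≠ 0)
    (heq : m * ((W : ℂ) - (z + c * m) * (z + m)) = z + c * m) :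
    c * m.im * (1 - ‖m‖ ^ 2 - c * W * ‖m‖ ^ 2 / ‖z + c * m‖ ^ 2)
      = (c * W * ‖m‖ ^ 2 / ‖z + c * m‖ ^ 2 + c * ‖m‖ ^ 2) * z.im := by
  set ζ := z + c * m with hζ
  set D := (W : ℂ) - ζ * (z + m)
  have hD : D ≠ 0 := by rintro h; rw [h, mul_zero] at heq; exact hne heq.symm
  have hm : m ≠ 0 := by rintro rfl; rw [zero_mul] at heq; exact hne heq.symm
  have hnorm : ‖ζ‖ ^ 2 = ‖m‖ ^ 2 * ‖D‖ ^ 2 := by rw [← heq, norm_mul, mul_pow]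
  have hid : m.im * ‖D‖ ^ 2 = W * (z.im + c * m.im) + ‖m‖ ^ 2 * ‖D‖ ^ 2 * (z.im + m.im) := calc
    m.im * ‖D‖ ^ 2 = (m * D * conj D).im := by
      rw [mul_assoc, Complex.mul_conj', ← Complex.ofReal_pow, Complex.im_mul_ofReal]
    _ = (ζ * conj D).im := by rw [heq]
    _ = W * (z.im + c * m.im) + ‖m‖ ^ 2 * ‖D‖ ^ 2 * (z.im + m.im) := by
      rw [im_mul_conj_ofReal_sub_mul, hnorm]; simp [hζ]
  rw [hnorm]
  have : ‖D‖ ≠ 0 := norm_ne_zero_iff.2 hD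
  have : ‖m‖ ≠ 0 := norm_ne_zero_iff.2 hm
  field_simp
  linear_combination c * hid

/-- Under the self-consistency equation, `1 - X - Y ≥ (1/2)·min(Im z, 1) > 0`. -/
theorem self_consistency_singularity_lower_bound (d : ℕ) (hd : 3 ≤ d) (z w m : ℂ)
    (hz : 0 < z.im) (hm : 0 < m.im)
    (hne : z + ((d : ℂ) / ((d : ℂ) - 1)) * m ≠ 0)
    (heq : m * ((‖w‖ : ℂ) ^ 2 - (z + ((d : ℂ) / ((d : ℂ) - 1)) * m) * (z + m))
      = z + ((d : ℂ) / ((d : ℂ) - 1)) * m) :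
    (1 / 2) * min z.im 1 ≤ 1 - ‖m‖ ^ 2 - Ysc d z w m
    ∧ 0 < (1 / 2) * min z.im 1 := by
  have hd' : (3 : ℝ) ≤ d := by exact_mod_cast hd
  set c : ℝ := d / (d - 1) with hc
  have hc0 : 0 < c := div_pos (by linarith) (by linarith)
  have hc2 : c ≤ 2 := by rw [hc, div_le_iff₀ (by linarith)]; linarith
  have hcC : (d : ℂ) / ((d : ℂ) - 1) = c := by rw [hc]; push_cast; rfl
  have hY : Ysc d z w m = c * ‖w‖ ^ 2 * ‖m‖ ^ 2 / ‖z + c * m‖ ^ 2 := by rw [Ysc, hcC]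
  rw [hcC] at hne heq
  have hbal := balance_of_self_consistency (W := ‖w‖ ^ 2) hne (by push_cast; exact heq)
  refine ⟨?_, by positivity⟩
  rw [hY]
  exact half_min_le_one_sub_of_balance hc0 hc2 hm hz (by positivity)
    (pow_le_pow_left₀ hm.le (Complex.im_le_norm m) 2) hbal
end

section
/- Under the assumptions of the self-consistency equation, the real part of m satisfies Re(m)/Re(z) = ((d−1)/d · Y − X)/(1 − Y + X) whenever Re(z) ≠ 0, and consequently Re(m)/Re(z) ≥ −1/2. -/
open ComplexConjugate

theorem re_mul_norm_sq_of_self_consistency (c : ℝ) (z w m : ℂ)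
    (heq : m * ((‖w‖ : ℂ) ^ 2 - (z + c * m) * (z + m)) = z + c * m) :
    ‖w‖ ^ 2 * ‖m‖ ^ 2 * (z.re + c * m.re)
      = ‖z + c * m‖ ^ 2 * (‖m‖ ^ 2 * (z.re + m.re) + m.re) := by
  have key : ((‖w‖ ^ 2 * ‖m‖ ^ 2 : ℝ) : ℂ) * conj (z + c * m)
      = ((‖z + c * m‖ ^ 2 : ℝ) : ℂ) * ((‖m‖ ^ 2 : ℝ) * (z + m) + conj m) := by
    push_cast
    rw [← Complex.mul_conj' m, ← Complex.mul_conj' (z + c * m)]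
    linear_combination (conj m * conj (z + c * m)) * heq
  simpa only [Complex.re_ofReal_mul, Complex.add_re, Complex.conj_re]
    using congrArg Complex.re key

theorem re_mul_one_sub_add_of_self_consistency {c Y : ℝ} (hc : c ≠ 0) {z w m : ℂ}
    (hS : z + c * m ≠ 0)
    (heq : m * ((‖w‖ : ℂ) ^ 2 - (z + c * m) * (z + m)) = z + c * m)
    (hY : Y = c * ‖w‖ ^ 2 * ‖m‖ ^ 2 / ‖z + c * m‖ ^ 2) :
    m.re * (1 - Y + ‖m‖ ^ 2) = z.re * (c⁻¹ * Y - ‖m‖ ^ 2) := by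
  have hS2 : ‖z + c * m‖ ^ 2 ≠ 0 := by positivity
  subst hY
  field_simp
  linear_combination -re_mul_norm_sq_of_self_consistency c z w m heq

theorem neg_half_le_div_of_nonneg {X Y k : ℝ} (hX : X ≤ 1) (hY : 0 ≤ Y) (hk : 1 / 2 ≤ k)
    (hden : 0 < 1 - Y + X) : -(1 / 2) ≤ (k * Y - X) / (1 - Y + X) := by
  rw [le_div_iff₀ hden]
  nlinarith [mul_nonneg hY (by linarith : (0 : ℝ) ≤ 2 * k - 1)]

theorem self_consistency_real_part_general (d : ℕ) (hd : 3 ≤ d) (z w m : ℂ)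
    (hzre : z.re ≠ 0)
    (hne : z + ((d : ℂ) / ((d : ℂ) - 1)) * m ≠ 0)
    (heq : m * ((‖w‖ : ℂ) ^ 2 - (z + ((d : ℂ) / ((d : ℂ) - 1)) * m) * (z + m))
      = z + ((d : ℂ) / ((d : ℂ) - 1)) * m)
    (hX : ‖m‖ ^ 2 ≤ 1)
    (hden : 0 < 1 - Ysc d z w m + ‖m‖ ^ 2) :
    m.re / z.re
      = (((d : ℝ) - 1) / (d : ℝ) * Ysc d z w m - ‖m‖ ^ 2)
          / (1 - Ysc d z w m + ‖m‖ ^ 2)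
    ∧ -(1 / 2) ≤ m.re / z.re := by
  have hd' : (3 : ℝ) ≤ d := by exact_mod_cast hd
  have hc : 0 < (d : ℝ) / (d - 1) := div_pos (by linarith) (by linarith)
  have hcast : (d : ℂ) / ((d : ℂ) - 1) = ((d / (d - 1) : ℝ) : ℂ) := by push_cast; rfl
  rw [hcast] at hne heq
  have hre := re_mul_one_sub_add_of_self_consistency hc.ne' hne heq
    (by rw [Ysc, hcast] : Ysc d z w m = _)
  rw [inv_div] at hre
  have hratio : m.re / z.re
      = (((d : ℝ) - 1) / d * Ysc d z w m - ‖m‖ ^ 2) / (1 - Ysc d z w m + ‖m‖ ^ 2) := by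
    rw [div_eq_div_iff hzre hden.ne']
    linear_combination hre
  refine ⟨hratio, hratio ▸ neg_half_le_div_of_nonneg hX ?_ ?_ hden⟩
  · exact div_nonneg (mul_nonneg (mul_nonneg hc.le (sq_nonneg _)) (sq_nonneg _)) (sq_nonneg _)
  · rw [le_div_iff₀ (by linarith)]
    linarith

/-- Under the self-consistency equation,
`Re(m)/Re(z) = ((d-1)/d·Y − X)/(1 − Y + X)` and consequently `Re(m)/Re(z) ≥ −1/2`. -/
theorem self_consistency_real_part (d : ℕ) (hd : 3 ≤ d) (z w m : ℂ)
    (hz : 0 < z.im) (hzre : z.re ≠ 0) (hm : 0 < m.im)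
    (hne : z + ((d : ℂ) / ((d : ℂ) - 1)) * m ≠ 0)
    (heq : m * ((‖w‖ : ℂ) ^ 2 - (z + ((d : ℂ) / ((d : ℂ) - 1)) * m) * (z + m))
      = z + ((d : ℂ) / ((d : ℂ) - 1)) * m)
    (hX : ‖m‖ ^ 2 ≤ 1) (hY : Ysc d z w m ≤ 1)
    (hden : 0 < 1 - Ysc d z w m + ‖m‖ ^ 2) :
    m.re / z.re
      = (((d : ℝ) - 1) / (d : ℝ) * Ysc d z w m - ‖m‖ ^ 2)
          / (1 - Ysc d z w m + ‖m‖ ^ 2)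
    ∧ -(1 / 2) ≤ m.re / z.re :=
  self_consistency_real_part_general d hd z w m hzre hne heq hX hden
end

section
/- For d ≥ 2, the maximum of √(d/(d−1))·ab + a² over nonnegative reals a, b with a² + b² = 1 equals λ = 1/2 + (1/2)·√((2d−1)/(d−1)). Moreover this value λ satisfies log_{d−1}(λ) < 1/2 for all d ≥ 3. -/
set_option maxHeartbeats 1000000 in
/-- The maximum of `√(d/(d−1))·ab + a²` over `a,b ≥ 0` with `a² + b² = 1` is
`λ = 1/2 + (1/2)√((2d−1)/(d−1))`, and `log_{d−1} λ < 1/2` for all `d ≥ 3`. -/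
theorem constrained_max_value (d : ℕ) (hd : 2 ≤ d) :
    IsGreatest {y : ℝ | ∃ a b : ℝ, 0 ≤ a ∧ 0 ≤ b ∧ a ^ 2 + b ^ 2 = 1 ∧
        y = Real.sqrt ((d : ℝ) / ((d : ℝ) - 1)) * a * b + a ^ 2}
      (1 / 2 + (1 / 2) * Real.sqrt ((2 * (d : ℝ) - 1) / ((d : ℝ) - 1)))
    ∧ (3 ≤ d →
        Real.logb ((d : ℝ) - 1)
          (1 / 2 + (1 / 2) * Real.sqrt ((2 * (d : ℝ) - 1) / ((d : ℝ) - 1))) < 1 / 2) := by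
  have hd2 : (2 : ℝ) ≤ (d : ℝ) := by exact_mod_cast hd
  have hd1 : (0 : ℝ) < (d : ℝ) - 1 := by linarith
  set c : ℝ := Real.sqrt ((d : ℝ) / ((d : ℝ) - 1)) with hc
  set s : ℝ := Real.sqrt ((2 * (d : ℝ) - 1) / ((d : ℝ) - 1)) with hs
  have hargc : (0 : ℝ) ≤ (d : ℝ) / ((d : ℝ) - 1) := by positivity
  have hargs : (0 : ℝ) ≤ (2 * (d : ℝ) - 1) / ((d : ℝ) - 1) := by
    apply div_nonneg (by linarith) (by linarith)
  have hc2 : c ^ 2 = (d : ℝ) / ((d : ℝ) - 1) := Real.sq_sqrt hargc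
  have hs2 : s ^ 2 = (2 * (d : ℝ) - 1) / ((d : ℝ) - 1) := Real.sq_sqrt hargs
  have hc0 : 0 ≤ c := Real.sqrt_nonneg _
  have hcs : c ^ 2 = s ^ 2 - 1 := by
    rw [hc2, hs2]; field_simp; ring
  have hs0 : (0:ℝ) ≤ s := Real.sqrt_nonneg _
  have hs2' : (2:ℝ) ≤ s ^ 2 := by
    rw [hs2, le_div_iff₀ hd1]; linarith
  have hs1 : 1 < s := by nlinarith
  have hspos : 0 < s := by linarith
  constructor
  · constructor
    · -- membership: witness a, b
      set a : ℝ := Real.sqrt ((s + 1) / (2 * s)) with ha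
      have haarg : (0:ℝ) < (s + 1) / (2 * s) := by
        apply div_pos <;> linarith
      have ha2 : a ^ 2 = (s + 1) / (2 * s) := Real.sq_sqrt haarg.le
      have ha0 : 0 < a := Real.sqrt_pos.mpr haarg
      set b : ℝ := c / (2 * s * a) with hb
      have hb0 : 0 ≤ b := by
        apply div_nonneg hc0
        apply mul_nonneg (by linarith) ha0.le
      refine ⟨a, b, ha0.le, hb0, ?_, ?_⟩
      · have hb2 : b ^ 2 = (s - 1) / (2 * s) := by
          rw [hb, div_pow, hcs, mul_pow, mul_pow, ha2]
          field_simp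
          ring
        rw [ha2, hb2]; field_simp; ring
      · have hab : a * b = c / (2 * s) := by
          rw [hb]; field_simp
        have : c * a * b = (s ^ 2 - 1) / (2 * s) := by
          rw [mul_assoc, hab, ← hcs]; field_simp
        rw [this, ha2]; field_simp; ring
    · -- upper bound
      rintro y ⟨a, b, ha0, hb0, hab, rfl⟩
      have hcab : 0 ≤ c * a * b := mul_nonneg (mul_nonneg hc0 ha0) hb0
      have hb1 : b ^ 2 ≤ 1 := by nlinarith [sq_nonneg a]
      have hab4 : (a ^ 2 + b ^ 2) ^ 2 = 1 := by rw [hab]; norm_num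
      have hXs : 0 ≤ (2 * c * a * b + a ^ 2 - b ^ 2) + s := by nlinarith
      nlinarith [sq_nonneg (c * (a ^ 2 - b ^ 2) - 2 * a * b), hcs, hab4, hXs, hab]
  · -- logb part
    intro hd3
    have hd3' : (3 : ℝ) ≤ (d : ℝ) := by exact_mod_cast hd3
    have hB : (1 : ℝ) < (d : ℝ) - 1 := by linarith
    set lam : ℝ := 1 / 2 + (1 / 2) * s with hlam
    have hlam0 : 0 < lam := by rw [hlam]; linarith
    -- s ≤ √(5/2)
    have hsle : s ≤ Real.sqrt (5 / 2) := by
      apply Real.sqrt_le_sqrt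
      rw [div_le_div_iff₀ hd1 (by norm_num)]; linarith
    have h159 : Real.sqrt (5 / 2) < (159/100) := by
      rw [Real.sqrt_lt' (by norm_num)]; norm_num
    have h141 : ((141/100) : ℝ) < Real.sqrt 2 := by
      rw [Real.lt_sqrt (by norm_num)]; norm_num
    have hsqB : Real.sqrt 2 ≤ Real.sqrt ((d : ℝ) - 1) := Real.sqrt_le_sqrt (show (2:ℝ) ≤ (d:ℝ) - 1 by linarith)
    have hkey : lam < Real.sqrt ((d : ℝ) - 1) := by
      rw [hlam]; nlinarith
    have hfin : Real.logb ((d : ℝ) - 1) lam < Real.logb ((d : ℝ) - 1) (Real.sqrt ((d : ℝ) - 1)) :=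
      Real.logb_lt_logb hB hlam0 hkey
    have heq : Real.logb ((d : ℝ) - 1) (Real.sqrt ((d : ℝ) - 1)) = 1 / 2 := by
      rw [Real.logb, Real.log_sqrt (by linarith)]
      rw [div_div, mul_comm, ← div_div, div_self (Real.log_ne_zero_of_pos_of_ne_one (by linarith) (by linarith))]
    rw [heq] at hfin
    exact hfin
end

section
/- For d ≥ 2 and nonnegative reals a, b with a² + b² = 1, one has ab + √((d−1)/d)·b² ≤ √(d/(d−1))·ab + a² whenever a ≥ b; more generally, max over the constraint set of ab + √((d−1)/d)·b² is at most the max of √(d/(d−1))·ab + a², which equals 1/2 + (1/2)√((2d−1)/(d−1)). -/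
/-!
With `c = √((d-1)/d) ≤ 1 ≤ 1/c = √(d/(d-1))`, the first inequality compares the two forms term by
term once `b² ≤ a²`. For the second, `ab + c b²` is the quadratic form of `[[0, 1/2], [1/2, c]]`,
whose largest eigenvalue is `(c + √(1 + c²))/2`; on the unit circle this is the Cauchy–Schwarz
bound `2ab + c(b² - a²) ≤ √(1 + c²)`, using `(2ab)² + (b² - a²)² = (a² + b²)² = 1`. Finally
`c ≤ 1` and `1 + c² = (2d-1)/d ≤ (2d-1)/(d-1)`.
-/

open Real

lemma mul_add_mul_sq_le_mul_add_sq {a b c k : ℝ} (ha : 0 ≤ a) (hb : 0 ≤ b) (hba : b ≤ a)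
    (hc : c ≤ 1) (hk : 1 ≤ k) : a * b + c * b ^ 2 ≤ k * a * b + a ^ 2 := by
  have hab : 0 ≤ a * b := mul_nonneg ha hb
  nlinarith [mul_le_mul_of_nonneg_right hk hab, mul_le_mul_of_nonneg_right hc (sq_nonneg b),
    mul_le_mul hba hba hb ha]

lemma mul_add_mul_sq_le_of_sq_add_sq_eq_one {a b : ℝ} (c : ℝ) (hab : a ^ 2 + b ^ 2 = 1) :
    a * b + c * b ^ 2 ≤ c / 2 + √(1 + c ^ 2) / 2 := by
  have hcs : 2 * a * b + c * (b ^ 2 - a ^ 2) ≤ √(1 + c ^ 2) := by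
    have hunit : (2 * a * b) ^ 2 + (b ^ 2 - a ^ 2) ^ 2 = 1 := by
      linear_combination (a ^ 2 + b ^ 2 + 1) * hab
    refine (le_abs_self _).trans (abs_le_sqrt ?_)
    nlinarith [sq_nonneg (c * (2 * a * b) - (b ^ 2 - a ^ 2))]
  have hc : c * (a ^ 2 + b ^ 2) = c := by rw [hab, mul_one]
  linarith

lemma sqrt_sub_one_div_le_one {x : ℝ} (hx : 0 < x) : √((x - 1) / x) ≤ 1 :=
  sqrt_le_one.mpr ((div_le_one hx).mpr (by linarith))

lemma one_le_sqrt_div_sub_one {x : ℝ} (hx : 1 < x) : 1 ≤ √(x / (x - 1)) :=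
  one_le_sqrt.mpr ((one_le_div (by linarith)).mpr (by linarith))

lemma one_add_sq_sqrt_sub_one_div_le {x : ℝ} (hx : 1 < x) :
    1 + √((x - 1) / x) ^ 2 ≤ (2 * x - 1) / (x - 1) := by
  have hx0 : 0 < x := by linarith
  rw [sq_sqrt (div_nonneg (by linarith) hx0.le),
    show 1 + (x - 1) / x = (2 * x - 1) / x by field_simp; ring]
  gcongr <;> linarith

/-- For `a, b ≥ 0` with `a² + b² = 1`: if `a ≥ b` then
`ab + √((d−1)/d)·b² ≤ √(d/(d−1))·ab + a²`, and in any case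
`ab + √((d−1)/d)·b² ≤ 1/2 + (1/2)√((2d−1)/(d−1))`. -/
theorem second_max_dominated (d : ℕ) (hd : 2 ≤ d) (a b : ℝ)
    (ha : 0 ≤ a) (hb : 0 ≤ b) (hab : a ^ 2 + b ^ 2 = 1) :
    (b ≤ a →
      a * b + Real.sqrt (((d : ℝ) - 1) / (d : ℝ)) * b ^ 2
        ≤ Real.sqrt ((d : ℝ) / ((d : ℝ) - 1)) * a * b + a ^ 2)
    ∧ a * b + Real.sqrt (((d : ℝ) - 1) / (d : ℝ)) * b ^ 2
        ≤ 1 / 2 + (1 / 2) * Real.sqrt ((2 * (d : ℝ) - 1) / ((d : ℝ) - 1)) := by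
  have hd1 : (1 : ℝ) < d := by exact_mod_cast hd
  have hc := sqrt_sub_one_div_le_one (zero_lt_one.trans hd1)
  refine ⟨fun hba ↦ mul_add_mul_sq_le_mul_add_sq ha hb hba hc (one_le_sqrt_div_sub_one hd1), ?_⟩
  have hroot := sqrt_le_sqrt (one_add_sq_sqrt_sub_one_div_le hd1)
  linarith [mul_add_mul_sq_le_of_sq_add_sq_eq_one (√(((d : ℝ) - 1) / d)) hab]
end
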